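/- arXiv:1902.04424 — 2 statements merged into one kernel-verified Lean document; each statement's English description precedes it below -/
import Mathlib

section
/- If A is a semicomputable subset of ℕ, then the pair (A, complement of A) is a Kalimullin pair: there is a computably enumerable set W ⊆ ℕ × ℕ such that A × Aᶜ ⊆ W and Aᶜ × A ⊆ Wᶜ. (Take W := {(x,y) : s_A(x,y) = x} where s_A is a computable selector for A.) -/
/-- Canonical computable coding of finite subsets of ℕ. -/
def Kfin (x : ℕ) : Finset ℕ := Denumerable.ofNat (Finset ℕ) x

/-- `s` is a selector function for the set `S`. -/
def Selector (S : Set ℕ) (s : ℕ → ℕ → ℕ) : Prop :=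
  (∀ x y, s x y = x ∨ s x y = y) ∧ ∀ x y, (x ∈ S ∨ y ∈ S) → s x y ∈ S

/-- A set is semicomputable iff it has a total computable selector function. -/
def SemiComputable (S : Set ℕ) : Prop :=
  ∃ s : ℕ → ℕ → ℕ, Computable₂ s ∧ Selector S s

/-- Computable join of two sets of naturals. -/
def join (A B : Set ℕ) : Set ℕ :=
  {n | ∃ a ∈ A, n = 2 * a} ∪ {n | ∃ b ∈ B, n = 2 * b + 1}

/-- Enumeration reducibility on subsets of ℕ. -/
def EnumReducible (A B : Set ℕ) : Prop :=
  ∃ Φ : Set (ℕ × ℕ), REPred (· ∈ Φ) ∧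
    ∀ x, x ∈ A ↔ ∃ d, (x, d) ∈ Φ ∧ (↑(Kfin d) : Set ℕ) ⊆ B

/-- A Kalimullin pair with a c.e. witness. -/
def KPair (A B : Set ℕ) : Prop :=
  ∃ W : Set (ℕ × ℕ), REPred (· ∈ W) ∧
    (∀ a ∈ A, ∀ b ∈ B, (a, b) ∈ W) ∧ (∀ a ∉ A, ∀ b ∉ B, (a, b) ∉ W)

/-- The binary (strict) ordering on subsets of ℕ. -/
def bLt (A B : Set ℕ) : Prop :=
  ∃ β : ℕ, β ∉ A ∧ β ∈ B ∧ ∀ x < β, (x ∈ A ↔ x ∈ B)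

/-- The binary (non-strict) ordering on subsets of ℕ. -/
def bLe (A B : Set ℕ) : Prop := bLt A B ∨ A = B

theorem computablePred_eq {α β : Type*} [Primcodable α] [Primcodable β] [DecidableEq β]
    {f g : α → β} (hf : Computable f) (hg : Computable g) :
    ComputablePred fun a => f a = g a :=
  (Primrec.eq.decide.to_comp.comp hf hg).computablePred

namespace Selector

variable {S : Set ℕ} {s : ℕ → ℕ → ℕ} {a b : ℕ}

theorem apply_eq_left (hs : Selector S s) (ha : a ∈ S) (hb : b ∉ S) : s a b = a :=
  (hs.1 a b).resolve_right fun h => hb (h ▸ hs.2 a b (Or.inl ha))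

theorem apply_ne_left (hs : Selector S s) (ha : a ∉ S) (hb : b ∈ S) : s a b ≠ a :=
  fun h => ha (h ▸ hs.2 a b (Or.inr hb))

end Selector

theorem kpair_of_semicomputable (A : Set ℕ) (h : SemiComputable A) :
    KPair A Aᶜ := by
  obtain ⟨s, hs, hsel⟩ := h
  refine ⟨{p | s p.1 p.2 = p.1}, ?_, ?_, ?_⟩
  · exact (computablePred_eq (hs.comp Computable.fst Computable.snd) Computable.fst).to_re
  · exact fun a ha b hb => hsel.apply_eq_left ha hb
  · exact fun a ha b hb => hsel.apply_ne_left ha (Set.not_notMem.mp hb)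
end

section
/- Suppose A, B ⊆ ℕ are both not computably enumerable and (A,B) is a Kalimullin pair with c.e. witness W (i.e., A × B ⊆ W and Aᶜ × Bᶜ ⊆ Wᶜ). Then A = {a : ∃ b, b ∉ B ∧ (a,b) ∈ W} and B = {b : ∃ a, a ∉ A ∧ (a,b) ∈ W}. -/
theorem REPred.comp {α β : Type*} [Primcodable α] [Primcodable β] {p : β → Prop}
    (hp : REPred p) {f : α → β} (hf : Computable f) : REPred fun a => p (f a) :=
  Partrec.comp hp hf

/-- If some `a ∈ A` had no partner `b ∉ B` with `(a, b) ∈ W`, then `B` would be the c.e.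
section `{b | (a, b) ∈ W}`. -/
theorem eq_setOf_exists_notMem_of_kpair {α β : Type*} [Primcodable α] [Primcodable β]
    {A : Set α} {B : Set β} {W : Set (α × β)} (hB : ¬ REPred (· ∈ B)) (hW : REPred (· ∈ W))
    (h1 : ∀ a ∈ A, ∀ b ∈ B, (a, b) ∈ W) (h2 : ∀ a ∉ A, ∀ b ∉ B, (a, b) ∉ W) :
    A = {a | ∃ b, b ∉ B ∧ (a, b) ∈ W} := by
  ext a
  simp only [Set.mem_ofPred_eq]
  refine ⟨fun ha => ?_, fun ⟨b, hb, hab⟩ => by_contra fun ha => h2 a ha b hb hab⟩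
  by_contra! hpartner
  have hsection : ∀ b, (a, b) ∈ W ↔ b ∈ B := fun b =>
    ⟨fun hab => by_contra fun hb => hpartner b hb hab, h1 a ha b⟩
  exact hB ((hW.comp ((Computable.const a).pair Computable.id)).of_eq hsection)

theorem kpair_witness_characterization (A B : Set ℕ) (W : Set (ℕ × ℕ))
    (hA : ¬ REPred (· ∈ A)) (hB : ¬ REPred (· ∈ B)) (hW : REPred (· ∈ W))
    (h1 : ∀ a ∈ A, ∀ b ∈ B, (a, b) ∈ W) (h2 : ∀ a ∉ A, ∀ b ∉ B, (a, b) ∉ W) :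
    A = {a : ℕ | ∃ b, b ∉ B ∧ (a, b) ∈ W} ∧
    B = {b : ℕ | ∃ a, a ∉ A ∧ (a, b) ∈ W} :=
  ⟨eq_setOf_exists_notMem_of_kpair hB hW h1 h2,
    eq_setOf_exists_notMem_of_kpair (W := Prod.swap ⁻¹' W) hA
      (hW.comp (Computable.snd.pair Computable.fst))
      (fun b hb a ha => h1 a ha b hb) (fun b hb a ha => h2 a ha b hb)⟩
end
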